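/- Let p be an odd prime and let f : (ZMod p)^n → ℂ be a Boolean function (f(x) ∈ {−1,1} for all x) with spectral norm ‖f̂‖₁ = 1. Then f is constant: f = 1 or f = −1. -/

import Mathlib

/-!
By Fourier inversion, `f x = ∑_α f̂(α) χ_α(x)`, a sum whose terms have total norm
`‖f̂‖₁ = 1 = ‖f x‖`. Equality in the triangle inequality forces `f̂(α) χ_α(x) = ‖f̂(α)‖ f(x)` for
all `α, x`. For an `α` with `f̂(α) ≠ 0`, comparing with `x = 0` gives `χ_α(x) = f(0) f(x) = ±1`;
as `χ_α(x)` is a `p`-th root of unity and `p` is odd, `χ_α(x) = 1`, hence `f x = f 0`.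
-/

/-- `ω = exp(2πi/p)`, a primitive `p`-th root of unity. -/
noncomputable def pomega (p : ℕ) : ℂ :=
  Complex.exp (2 * Real.pi * Complex.I / p)

/-- The character `χ_α(x) = ω^{⟨α,x⟩}` on `(ZMod p)^n` (well-defined via `ZMod.val`
since `ω^p = 1`). -/
noncomputable def pchi (p n : ℕ) (α x : Fin n → ZMod p) : ℂ :=
  pomega p ^ (∑ i, α i * x i : ZMod p).val

/-- The Fourier coefficient `f̂(α) = p^{-n} ∑_x f(x) conj(χ_α(x))`. -/
noncomputable def phat (p n : ℕ) [NeZero p] (f : (Fin n → ZMod p) → ℂ)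
    (α : Fin n → ZMod p) : ℂ :=
  ((p : ℂ) ^ n)⁻¹ * ∑ x : Fin n → ZMod p, f x * (starRingEnd ℂ) (pchi p n α x)

open Finset ComplexConjugate

lemma AddChar.map_sum_eq_prod {A M ι : Type*} [AddCommMonoid A] [CommMonoid M]
    (ψ : AddChar A M) (s : Finset ι) (g : ι → A) : ψ (∑ i ∈ s, g i) = ∏ i ∈ s, ψ (g i) := by
  classical
  induction s using Finset.induction_on with
  | empty => simp
  | insert i s hi ih => rw [sum_insert hi, prod_insert hi, AddChar.map_add_eq_mul, ih]

lemma eq_one_of_pow_eq_one_of_sq_eq_one {M : Type*} [Monoid M] {a : M} {k : ℕ} (hk : Odd k)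
    (hak : a ^ k = 1) (ha2 : a ^ 2 = 1) : a = 1 := by
  simpa [Nat.Coprime.gcd_eq_one hk.coprime_two_right] using pow_gcd_eq_one.2 ⟨hak, ha2⟩

lemma Complex.mul_conj_sum_eq_of_sum_norm_eq {ι : Type*} {s : Finset ι} {z : ι → ℂ}
    (h : ∑ j ∈ s, ‖z j‖ = ‖∑ j ∈ s, z j‖) {i : ι} (hi : i ∈ s) :
    z i * conj (∑ j ∈ s, z j) = ‖z i‖ * ‖∑ j ∈ s, z j‖ := by
  set S := ∑ j ∈ s, z j
  have hle : ∀ j ∈ s, (z j * conj S).re ≤ ‖z j‖ * ‖S‖ := fun j _ => by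
    simpa using Complex.re_le_norm (z j * conj S)
  have hsum : ∑ j ∈ s, (z j * conj S).re = ∑ j ∈ s, ‖z j‖ * ‖S‖ := by
    rw [← Complex.re_sum, ← sum_mul, Complex.mul_conj, ← sum_mul, h, Complex.normSq_eq_norm_sq]
    norm_cast
    ring
  have hre : (z i * conj S).re = ‖z i * conj S‖ := by
    simpa using (sum_eq_sum_iff_of_le hle).1 hsum i hi
  rw [Complex.eq_coe_norm_of_nonneg (Complex.re_eq_norm.1 hre)]
  simp

lemma pomega_pow_self (p : ℕ) [NeZero p] : pomega p ^ p = 1 :=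
  (Complex.isPrimitiveRoot_exp p (NeZero.ne p)).pow_eq_one

noncomputable def pomegaChar (p : ℕ) [NeZero p] : AddChar (ZMod p) ℂ :=
  AddChar.zmodChar p (pomega_pow_self p)

lemma isPrimitive_pomegaChar (p : ℕ) [NeZero p] : (pomegaChar p).IsPrimitive :=
  AddChar.zmodChar_primitive_of_primitive_root p (Complex.isPrimitiveRoot_exp p (NeZero.ne p))

section pchi

variable {p n : ℕ} [NeZero p]

lemma pchi_eq_pomegaChar (α x : Fin n → ZMod p) :
    pchi p n α x = pomegaChar p (∑ i, α i * x i) := rfl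

lemma norm_pchi (α x : Fin n → ZMod p) : ‖pchi p n α x‖ = 1 :=
  (pomegaChar p).norm_apply _

lemma pchi_zero_right (α : Fin n → ZMod p) : pchi p n α 0 = 1 := by
  simp [pchi_eq_pomegaChar]

lemma pchi_pow_self (α x : Fin n → ZMod p) : pchi p n α x ^ p = 1 := by
  rw [pchi, ← pow_mul, mul_comm, pow_mul, pomega_pow_self, one_pow]

lemma pchi_mul_conj_pchi (α x y : Fin n → ZMod p) :
    pchi p n α x * conj (pchi p n α y) = pchi p n α (x - y) := by
  rw [pchi_eq_pomegaChar, pchi_eq_pomegaChar, pchi_eq_pomegaChar, ← AddChar.map_neg_eq_conj,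
    ← AddChar.map_add_eq_mul, ← sub_eq_add_neg]
  simp only [Pi.sub_apply, mul_sub, sum_sub_distrib]

lemma sum_pchi (y : Fin n → ZMod p) :
    ∑ α, pchi p n α y = if y = 0 then (p : ℂ) ^ n else 0 := by
  classical
  simp only [pchi_eq_pomegaChar, AddChar.map_sum_eq_prod]
  rw [← Fintype.prod_sum fun i a => pomegaChar p (a * y i)]
  simp only [AddChar.sum_mulShift _ (isPrimitive_pomegaChar p), ZMod.card, Nat.cast_ite,
    Nat.cast_zero, Fintype.prod_ite_zero, prod_const, card_univ, Fintype.card_fin, funext_iff,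
    Pi.zero_apply]

lemma sum_phat_mul_pchi (f : (Fin n → ZMod p) → ℂ) (x : Fin n → ZMod p) :
    ∑ α, phat p n f α * pchi p n α x = f x := by
  have hpn : (p : ℂ) ^ n ≠ 0 := pow_ne_zero _ (Nat.cast_ne_zero.mpr (NeZero.ne p))
  calc ∑ α, phat p n f α * pchi p n α x
      = ((p : ℂ) ^ n)⁻¹ * ∑ y, f y * ∑ α, pchi p n α (x - y) := by
        simp only [phat, mul_assoc, ← mul_sum, sum_mul, ← pchi_mul_conj_pchi]
        rw [sum_comm]
        simp only [mul_sum, mul_comm, mul_left_comm]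
    _ = f x := by
        simp only [sum_pchi, sub_eq_zero, mul_ite, mul_zero, eq_comm (a := x), sum_ite_eq',
          mem_univ, if_true]
        field_simp

end pchi

/-- **Lemma 4.2**: a Boolean function `f : (ZMod p)^n → {−1,1}`, `p` an odd prime,
with spectral norm exactly `1` is constant (`f = 1` or `f = -1`). -/
theorem p_spectral_norm_one {p n : ℕ} [Fact p.Prime] (hp2 : p ≠ 2)
    (f : (Fin n → ZMod p) → ℂ) (hf : ∀ x, f x = 1 ∨ f x = -1)
    (hA : ∑ α : Fin n → ZMod p, ‖phat p n f α‖ = 1) :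
    (∀ x, f x = 1) ∨ (∀ x, f x = -1) := by
  have hsq : ∀ x, f x ^ 2 = 1 := fun x => by rcases hf x with h | h <;> simp [h]
  have hconj : ∀ x, conj (f x) = f x := fun x => by rcases hf x with h | h <;> simp [h]
  have hnorm : ∀ x, ‖f x‖ = 1 := fun x => by rcases hf x with h | h <;> simp [h]
  have hterm : ∀ α x, phat p n f α * pchi p n α x * f x = ‖phat p n f α‖ := by
    intro α x
    have hnorm_sum : ∑ β, ‖phat p n f β * pchi p n β x‖ = ‖∑ β, phat p n f β * pchi p n β x‖ := by
      simp [norm_pchi, hA, sum_phat_mul_pchi, hnorm]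
    have h := Complex.mul_conj_sum_eq_of_sum_norm_eq hnorm_sum (mem_univ α)
    simpa [sum_phat_mul_pchi, hconj, hnorm, norm_pchi] using h
  obtain ⟨α, hα⟩ : ∃ α, phat p n f α ≠ 0 := by
    by_contra! h
    simp [h] at hA
  have hconst : ∀ x, f x = f 0 := by
    intro x
    have hchi : pchi p n α x * f x = f 0 := mul_left_cancel₀ hα <| by
      have h0 := hterm α 0
      rw [pchi_zero_right, mul_one] at h0
      linear_combination hterm α x - h0
    have hone : pchi p n α x = 1 := by
      refine eq_one_of_pow_eq_one_of_sq_eq_one ((Fact.out : p.Prime).odd_of_ne_two hp2)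
        (pchi_pow_self α x) ?_
      linear_combination -pchi p n α x ^ 2 * hsq x + (pchi p n α x * f x + f 0) * hchi + hsq 0
    simpa [hone] using hchi
  rcases hf 0 with h | h
  · exact Or.inl fun x => (hconst x).trans h
  · exact Or.inr fun x => (hconst x).trans h
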